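/- Let $p$ be a prime, $L \ge 2$, $r \ge 2(L-1)$. Every element of $\mathrm{SL}_d(\mathbb{Z}/p^r\mathbb{Z})$ congruent to $I$ modulo $p^{4(L-1)}$ can be written as $U_1 L_1 U_2 L_2$ where $U_1, U_2$ are upper unitriangular, $L_1, L_2$ are lower unitriangular, and all strictly off-diagonal entries of $U_1, U_2, L_1, L_2$ are divisible by $p^{2(L-1)}$, in the case $d = 2$. -/

import Mathlib

/-!
In `U(x) L(y) U(z) L(w)` the bottom-right entry is `d = 1 + y z`, the off-diagonal entries are
`z + x d` and `y + w d`, and once `d` is a unit the top-left entry is forced by the determinant.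
For `A ≡ I` mod `p^{4(L-1)}` write `A₁₁ = 1 + y z` with `y = p^{2(L-1)}`, `z = p^{2(L-1)} s`;
it is a unit because `p` is nilpotent in `ℤ/p^rℤ`, and then `x = A₁₁⁻¹ (A₀₁ - z)` and `w = A₁₁⁻¹ (A₁₀ - y)` are again divisible
by `p^{2(L-1)}`.
-/

open Matrix

lemma ZMod.isNilpotent_natCast_pow_self (p r : ℕ) : IsNilpotent (p : ZMod (p ^ r)) :=
  ⟨r, by rw [← Nat.cast_pow, ZMod.natCast_self]⟩

lemma IsNilpotent.isUnit_of_dvd_sub_one {R : Type*} [CommRing R] {q t : R}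
    (hq : IsNilpotent q) (h : q ∣ t - 1) : IsUnit t := by
  obtain ⟨s, hs⟩ := h
  have := ((Commute.all q s).isNilpotent_mul_right hq).isUnit_one_add
  rwa [← hs, add_sub_cancel] at this

namespace Matrix

variable {R : Type*} [CommRing R]

lemma eq_of_det_eq_fin_two {M N : Matrix (Fin 2) (Fin 2) R} (hdet : M.det = N.det)
    (h01 : M 0 1 = N 0 1) (h10 : M 1 0 = N 1 0) (h11 : M 1 1 = N 1 1)
    (hreg : IsRightRegular (M 1 1)) : M = N := by
  have h00 : M 0 0 = N 0 0 := hreg (show M 0 0 * M 1 1 = N 0 0 * M 1 1 by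
    rw [det_fin_two, det_fin_two, h01, h10] at hdet
    linear_combination hdet - N 0 0 * h11)
  rw [eta_fin_two M, eta_fin_two N, h00, h01, h10, h11]

lemma upper_mul_lower_mul_upper_mul_lower (x y z w : R) :
    !![1, x; 0, 1] * !![1, 0; y, 1] * !![1, z; 0, 1] * !![1, 0; w, 1] =
      !![1 + x * y + w * (z + x * (1 + y * z)), z + x * (1 + y * z);
        y + w * (1 + y * z), 1 + y * z] := by
  ext i j
  fin_cases i <;> fin_cases j <;> simp [mul_apply, Fin.sum_univ_two] <;> ring

lemma det_upper_mul_lower_mul_upper_mul_lower (x y z w : R) :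
    (!![1, x; 0, 1] * !![1, 0; y, 1] * !![1, z; 0, 1] * !![1, 0; w, 1]).det = 1 := by
  simp only [det_mul, det_fin_two_of]
  ring

theorem exists_upper_mul_lower_mul_upper_mul_lower (I : Ideal R)
    {M : Matrix (Fin 2) (Fin 2) R} (hM : M.det = 1) (hb : M 0 1 ∈ I) (hc : M 1 0 ∈ I)
    {y z : R} (hy : y ∈ I) (hz : z ∈ I) (hd : M 1 1 = 1 + y * z) (hunit : IsUnit (M 1 1)) :
    ∃ x w, x ∈ I ∧ w ∈ I ∧
      M = !![1, x; 0, 1] * !![1, 0; y, 1] * !![1, z; 0, 1] * !![1, 0; w, 1] := by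
  have cancel (t : R) : ↑hunit.unit⁻¹ * t * M 1 1 = t := by
    rw [mul_right_comm, hunit.val_inv_mul, one_mul]
  refine ⟨↑hunit.unit⁻¹ * (M 0 1 - z), ↑hunit.unit⁻¹ * (M 1 0 - y),
    I.mul_mem_left _ (I.sub_mem hb hz), I.mul_mem_left _ (I.sub_mem hc hy), ?_⟩
  refine eq_of_det_eq_fin_two (by rw [hM, det_upper_mul_lower_mul_upper_mul_lower]) ?_ ?_ ?_
    hunit.isRegular.right <;>
  simp only [upper_mul_lower_mul_upper_mul_lower, ← hd, of_apply, cons_val', cons_val_zero,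
    cons_val_one, empty_val', cons_val_fin_one, cancel, add_sub_cancel]

end Matrix

theorem sl2_ULUL_decomposition_general (p r L : ℕ) (hL : 2 ≤ L)
    (A : Matrix.SpecialLinearGroup (Fin 2) (ZMod (p ^ r)))
    (hA : ∀ i j, (p : ZMod (p ^ r)) ^ (4 * (L - 1)) ∣
      ((A : Matrix (Fin 2) (Fin 2) (ZMod (p ^ r))) i j
        - (1 : Matrix (Fin 2) (Fin 2) (ZMod (p ^ r))) i j)) :
    ∃ x y z w : ZMod (p ^ r),
      (p : ZMod (p ^ r)) ^ (2 * (L - 1)) ∣ x ∧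
      (p : ZMod (p ^ r)) ^ (2 * (L - 1)) ∣ y ∧
      (p : ZMod (p ^ r)) ^ (2 * (L - 1)) ∣ z ∧
      (p : ZMod (p ^ r)) ^ (2 * (L - 1)) ∣ w ∧
      (A : Matrix (Fin 2) (Fin 2) (ZMod (p ^ r)))
        = !![1, x; 0, 1] * !![1, 0; y, 1] * !![1, z; 0, 1] * !![1, 0; w, 1] := by
  set k := 2 * (L - 1)
  set M := (A : Matrix (Fin 2) (Fin 2) (ZMod (p ^ r)))
  set I := Ideal.span {(p : ZMod (p ^ r)) ^ k}
  have hk : 4 * (L - 1) = k + k := by omega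
  obtain ⟨s, hs⟩ : (p : ZMod (p ^ r)) ^ (k + k) ∣ M 1 1 - 1 := by simpa [hk] using hA 1 1
  have off_diag_mem : ∀ {i j}, i ≠ j → M i j ∈ I := fun {i j} hij =>
    Ideal.mem_span_singleton.2 <|
      (pow_dvd_pow _ (by omega : k ≤ 4 * (L - 1))).trans (by simpa [hij] using hA i j)
  have hunit : IsUnit (M 1 1) := (ZMod.isNilpotent_natCast_pow_self p r).isUnit_of_dvd_sub_one
    ((dvd_pow_self _ (by omega)).trans ⟨s, hs⟩)
  obtain ⟨x, w, hx, hw, hM⟩ := exists_upper_mul_lower_mul_upper_mul_lower I A.2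
    (off_diag_mem (by decide)) (off_diag_mem (by decide)) (Ideal.mem_span_singleton_self _)
    (I.mul_mem_right s (Ideal.mem_span_singleton_self _))
    (by rw [pow_add] at hs; linear_combination hs) hunit
  rw [Ideal.mem_span_singleton] at hx hw
  exact ⟨x, _, _, w, hx, dvd_rfl, dvd_mul_right _ _, hw, hM⟩

/-- case `d = 2`: every element of `SL₂(ℤ/p^rℤ)` congruent to
`I` mod `p^{4(L-1)}` is `U₁ L₁ U₂ L₂` with `U₁, U₂` upper unitriangular,
`L₁, L₂` lower unitriangular, all off-diagonal entries divisible by `p^{2(L-1)}`. -/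
theorem sl2_ULUL_decomposition (p r L : ℕ) (hp : p.Prime) (hL : 2 ≤ L)
    (hr : 2 * (L - 1) ≤ r)
    (A : Matrix.SpecialLinearGroup (Fin 2) (ZMod (p ^ r)))
    (hA : ∀ i j, (p : ZMod (p ^ r)) ^ (4 * (L - 1)) ∣
      ((A : Matrix (Fin 2) (Fin 2) (ZMod (p ^ r))) i j
        - (1 : Matrix (Fin 2) (Fin 2) (ZMod (p ^ r))) i j)) :
    ∃ x y z w : ZMod (p ^ r),
      (p : ZMod (p ^ r)) ^ (2 * (L - 1)) ∣ x ∧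
      (p : ZMod (p ^ r)) ^ (2 * (L - 1)) ∣ y ∧
      (p : ZMod (p ^ r)) ^ (2 * (L - 1)) ∣ z ∧
      (p : ZMod (p ^ r)) ^ (2 * (L - 1)) ∣ w ∧
      (A : Matrix (Fin 2) (Fin 2) (ZMod (p ^ r)))
        = !![1, x; 0, 1] * !![1, 0; y, 1] * !![1, z; 0, 1] * !![1, 0; w, 1] :=
  sl2_ULUL_decomposition_general p r L hL A hA
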